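/- If A and B are invertible c×c matrices over a field satisfying B A² B⁻¹ = A³, then B A B⁻¹ A⁻¹ B A⁻¹ B⁻¹ A = I. -/

import Mathlib

/-!
In a finite group, conjugation preserves orders, so `a ^ 2` and `a ^ 3` have the same order;
this forces the order of `a` to be odd, so `a` is a power of `a ^ 2` and `b * a * b⁻¹` is a power
of `b * a ^ 2 * b⁻¹ = a ^ 3`, hence commutes with `a`. The relation therefore holds in every
residually finite group, and by Mal'cev's theorem the subgroup of `GL_c(F)` generated by `A` and
`B` is one: the entries of its generators and of their inverses lie in a finitely generated
ring, whose quotients by maximal ideals are finite fields.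
-/

section ConjSqEqCube

variable {G : Type*} [Group G] {a b : G}

theorem IsOfFinOrder.coprime_two_orderOf_of_conj_sq_eq_cube (ha : IsOfFinOrder a)
    (h : b * a ^ 2 * b⁻¹ = a ^ 3) : Nat.Coprime 2 (orderOf a) := by
  have hn := ha.orderOf_pos
  have hgcd : (orderOf a).gcd 2 = (orderOf a).gcd 3 := by
    have hord : orderOf (a ^ 2) = orderOf (a ^ 3) := by
      rw [← h, ← MulAut.conj_apply, MulEquiv.orderOf_eq]
    rw [orderOf_pow' a two_ne_zero, orderOf_pow' a three_ne_zero] at hord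
    rw [← Nat.div_div_self (Nat.gcd_dvd_left _ 2) hn.ne', hord,
      Nat.div_div_self (Nat.gcd_dvd_left _ 3) hn.ne']
  have h2 : (orderOf a).gcd 2 ∣ 2 := Nat.gcd_dvd_right _ _
  have h3 : (orderOf a).gcd 2 ∣ 3 := hgcd ▸ Nat.gcd_dvd_right _ _
  rw [Nat.coprime_comm, Nat.Coprime, ← Nat.dvd_one]
  simpa using Nat.dvd_sub h3 h2

theorem IsOfFinOrder.commute_conj_of_conj_sq_eq_cube (ha : IsOfFinOrder a)
    (h : b * a ^ 2 * b⁻¹ = a ^ 3) : Commute (b * a * b⁻¹) a := by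
  obtain ⟨k, hk⟩ := Subgroup.mem_zpowers_iff.mp
    (mem_zpowers_pow_iff.mpr (ha.coprime_two_orderOf_of_conj_sq_eq_cube h))
  have hconj : b * a * b⁻¹ = (a ^ 3) ^ k := by
    rw [← h, conj_zpow, hk]
  rw [hconj]
  exact ((Commute.refl a).pow_left 3).zpow_left k

theorem Group.ResiduallyFinite.commute_conj_of_conj_sq_eq_cube [Group.ResiduallyFinite G]
    (h : b * a ^ 2 * b⁻¹ = a ^ 3) : Commute (b * a * b⁻¹) a := by
  refine commutatorElement_eq_one_iff_commute.mp
    (Group.eq_one_iff_forall_finiteIndexNormalSubroup _ fun H ↦ ?_)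
  let π := QuotientGroup.mk' H.toSubgroup
  have hπ : π b * π a ^ 2 * (π b)⁻¹ = π a ^ 3 := by
    simpa only [map_mul, map_pow, map_inv] using congrArg π h
  have hcomm := (isOfFinOrder_of_finite (π a)).commute_conj_of_conj_sq_eq_cube hπ
  rw [← FiniteIndexNormalSubgroup.mem_toSubgroup_iff, ← QuotientGroup.eq_one_iff,
    ← QuotientGroup.mk'_apply]
  simpa only [commutatorElement_def, map_mul, map_inv] using
    commutatorElement_eq_one_iff_commute.mpr hcomm

end ConjSqEqCube

instance Int.isJacobsonRing : IsJacobsonRing ℤ := by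
  rw [isJacobsonRing_iff_prime_eq]
  intro P hP
  by_cases hbot : P = ⊥
  · subst hbot
    refine le_antisymm (fun x hx ↦ ?_) Ideal.le_jacobson
    rw [Ideal.mem_jacobson_bot] at hx
    have h1 := Int.isUnit_iff.mp (hx 1)
    have h2 := Int.isUnit_iff.mp (hx 2)
    rw [Submodule.mem_bot]
    omega
  · have := hP.isMaximal hbot
    exact Ideal.jacobson_eq_self_of_isMaximal

theorem finite_of_module_finite_int (k : Type*) [Field k] [Module.Finite ℤ k] : Finite k := by
  obtain ⟨p, hp⟩ := CharP.exists k
  rcases CharP.char_is_prime_or_zero k p with hprime | rfl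
  · have : Fact p.Prime := ⟨hprime⟩
    let := ZMod.algebra k p
    have : Module.Finite (ZMod p) k := .of_restrictScalars_finite ℤ (ZMod p) k
    exact Module.finite_of_finite (ZMod p)
  · have : CharZero k := CharP.charP_to_charZero k
    have : Algebra.IsIntegral ℤ k := .of_finite ℤ k
    exact absurd (isField_of_isIntegral_of_isField (algebraMap ℤ k).injective_int
      (Field.toIsField k)) Int.not_isField

theorem Ideal.IsMaximal.finite_quotient_of_finiteType_int {R : Type*} [CommRing R]
    [Algebra.FiniteType ℤ R] {m : Ideal R} (hm : m.IsMaximal) : Finite (R ⧸ m) := by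
  let := Ideal.Quotient.field m
  have : Algebra.FiniteType ℤ (R ⧸ m) :=
    .of_surjective (Ideal.Quotient.mkₐ ℤ m) (Ideal.Quotient.mkₐ_surjective ℤ m)
  have : Module.Finite ℤ (R ⧸ m) := finite_of_finite_type_of_isJacobsonRing ℤ (R ⧸ m)
  exact finite_of_module_finite_int _

namespace Matrix.GeneralLinearGroup

variable {n : Type*} [Fintype n] [DecidableEq n]

theorem map_injective {S K : Type*} [CommRing S] [CommRing K] {f : S →+* K}
    (hf : Function.Injective f) : Function.Injective (map (n := n) f) :=
  fun _ _ h ↦ Units.ext (Matrix.map_injective hf (congrArg Units.val h))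

theorem mem_range_map_of_forall_mem_range {S K : Type*} [CommRing S] [CommRing K]
    {f : S →+* K} (hf : Function.Injective f) {g : GL n K}
    (hg : ∀ i j, g i j ∈ f.range) (hg' : ∀ i j, g⁻¹ i j ∈ f.range) :
    g ∈ (map f).range := by
  choose M hM using hg
  choose M' hM' using hg'
  have hinj : Function.Injective (f.mapMatrix : Matrix n n S →+* Matrix n n K) :=
    Matrix.map_injective hf
  have hmap : f.mapMatrix (of M) = g := Matrix.ext hM
  have hmap' : f.mapMatrix (of M') = (g⁻¹ : GL n K) := Matrix.ext hM'
  have h₁ : of M * of M' = 1 := hinj (by rw [map_mul, map_one, hmap, hmap', g.mul_inv])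
  have h₂ : of M' * of M = 1 := hinj (by rw [map_mul, map_one, hmap, hmap', g.inv_mul])
  exact ⟨⟨of M, of M', h₁, h₂⟩, Units.ext hmap⟩

open Set in
theorem exists_finiteType_int_subalgebra_closure_le_range_map {K : Type*} [CommRing K]
    (S : Finset (GL n K)) (x : K) :
    ∃ R : Subalgebra ℤ K, Algebra.FiniteType ℤ R ∧ x ∈ R ∧
      Subgroup.closure (S : Set (GL n K)) ≤ (map (R.val : R →+* K)).range := by
  let T : Set K := insert x (⋃ s ∈ S, (range fun p : n × n ↦ s p.1 p.2) ∪
    range fun p : n × n ↦ (s⁻¹ : GL n K) p.1 p.2)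
  refine ⟨Algebra.adjoin ℤ T, .adjoin_of_finite (toFinite T),
    Algebra.subset_adjoin (mem_insert _ _), (Subgroup.closure_le _).mpr fun s hs ↦ ?_⟩
  refine mem_range_map_of_forall_mem_range Subtype.val_injective
    (fun i j ↦ ⟨⟨_, Algebra.subset_adjoin ?_⟩, rfl⟩)
    (fun i j ↦ ⟨⟨_, Algebra.subset_adjoin ?_⟩, rfl⟩)
  · exact mem_insert_of_mem _ (mem_biUnion hs (Or.inl ⟨(i, j), rfl⟩))
  · exact mem_insert_of_mem _ (mem_biUnion hs (Or.inr ⟨(i, j), rfl⟩))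

theorem residuallyFinite_of_fg {F : Type*} [Field F] (Γ : Subgroup (GL n F)) (hΓ : Γ.FG) :
    Group.ResiduallyFinite Γ := by
  obtain ⟨S, rfl⟩ := hΓ
  refine Group.residuallyFinite_of_forall_exists_finite_monoidHom fun γ hγ ↦ ?_
  obtain ⟨i, j, hij⟩ : ∃ i j, ((γ : GL n F) - 1 : Matrix n n F) i j ≠ 0 := by
    by_contra! h
    exact hγ (Subtype.ext (Units.ext (sub_eq_zero.mp (Matrix.ext h))))
  set r := ((γ : GL n F) - 1 : Matrix n n F) i j with hr
  -- `r⁻¹` is adjoined so that `r` stays a unit, hence nonzero modulo every maximal ideal.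
  obtain ⟨R, _, hrinv, hlift⟩ := exists_finiteType_int_subalgebra_closure_le_range_map S r⁻¹
  let ι : R →+* F := R.val
  have hι : Function.Injective ι := Subtype.val_injective
  let e := MonoidHom.ofInjective (map_injective (n := n) hι)
  let ψ : Subgroup.closure (S : Set (GL n F)) →* GL n R :=
    e.symm.toMonoidHom.comp (Subgroup.inclusion hlift)
  have hψ : ∀ x, map ι (ψ x) = x := fun x ↦ congrArg Subtype.val (e.apply_symm_apply _)
  obtain ⟨m, hm⟩ := Ideal.exists_maximal R
  have := hm.finite_quotient_of_finiteType_int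
  refine ⟨GL n (R ⧸ m), inferInstance, inferInstance, (map (Ideal.Quotient.mk m)).comp ψ,
    fun h ↦ ?_⟩
  set u := ((ψ γ : GL n R) - 1 : Matrix n n R) i j
  have hιu : ι u = r := by
    rw [hr, ← hψ γ]
    change _ = (ι.mapMatrix (ψ γ : Matrix n n R) - 1) i j
    rw [← map_one ι.mapMatrix, ← map_sub]
    rfl
  have hu : IsUnit u :=
    .of_mul_eq_one (⟨r⁻¹, hrinv⟩ : R)
      (hι (by rw [map_mul, hιu, map_one]; exact mul_inv_cancel₀ hij))
  have hu0 : Ideal.Quotient.mk m u = 0 := by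
    have h' : (Ideal.Quotient.mk m).mapMatrix ((ψ γ : Matrix n n R) - 1) = 0 := by
      rw [map_sub, map_one]
      exact sub_eq_zero.mpr (congrArg Units.val h)
    exact congrFun (congrFun h' i) j
  exact hm.ne_top (Ideal.eq_top_of_isUnit_mem m (Ideal.Quotient.eq_zero_iff_mem.mp hu0) hu)

end Matrix.GeneralLinearGroup

theorem stmt_10_general {F : Type} [Field F] (c : ℕ)
    (A B : GL (Fin c) F) (h : B * A ^ 2 * B⁻¹ = A ^ 3) :
    B * A * B⁻¹ * A⁻¹ * (B * A⁻¹ * B⁻¹) * A = 1 := by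
  let Γ := Subgroup.closure ({A, B} : Set (GL (Fin c) F))
  have : Group.ResiduallyFinite Γ :=
    Matrix.GeneralLinearGroup.residuallyFinite_of_fg Γ
      ((Subgroup.fg_iff Γ).mpr ⟨{A, B}, rfl, Set.toFinite _⟩)
  let a : Γ := ⟨A, Subgroup.subset_closure (by simp)⟩
  let b : Γ := ⟨B, Subgroup.subset_closure (by simp)⟩
  have hc : Commute (B * A * B⁻¹) A :=
    (Group.ResiduallyFinite.commute_conj_of_conj_sq_eq_cube (a := a) (b := b)
      (Subtype.ext h)).map Γ.subtype
  calc B * A * B⁻¹ * A⁻¹ * (B * A⁻¹ * B⁻¹) * A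
      = B * A * B⁻¹ * A⁻¹ * (B * A * B⁻¹)⁻¹ * A := by group
    _ = A⁻¹ * (B * A * B⁻¹) * (B * A * B⁻¹)⁻¹ * A := by rw [hc.inv_right.eq]
    _ = 1 := by group

theorem stmt_10 {F : Type} [Field F] (c : ℕ) (hc : 1 ≤ c)
    (A B : GL (Fin c) F) (h : B * A ^ 2 * B⁻¹ = A ^ 3) :
    B * A * B⁻¹ * A⁻¹ * (B * A⁻¹ * B⁻¹) * A = 1 :=
  stmt_10_general c A B h
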